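/- arXiv:0804.3209 — 4 statements merged into one kernel-verified Lean document; each statement's English description precedes it below -/
import Mathlib

section
/- Let ρ : L∞ → ℝ be given by ρ(X) = sup_{f ∈ H} E[−fX] for a nonempty set H ⊆ L¹₊ of densities with E[f] = 1. If H is uniformly integrable, then ρ has the Lebesgue property: for every uniformly (a.s.) bounded sequence Xₙ converging in probability to X, ρ(Xₙ) → ρ(X). -/
/-!
A uniformly bounded sequence converging in probability converges in `L¹` (Vitali). For a density
`f` and a level `K`, splitting `Ω` into `{f ≤ K}` and `{f > K}` gives
`|E[f (Xₙ - X)]| ≤ K ‖Xₙ - X‖₁ + D E[f 1_{f > K}]`, where `D` bounds `|Xₙ - X|`. Uniform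
integrability of `H` makes the last term small uniformly in `f ∈ H`, and a supremum moves by at
most the uniform distance between the families it is taken over.
-/

open MeasureTheory Filter Topology

namespace MeasureTheory

variable {Ω : Type*} [MeasurableSpace Ω] {μ : Measure Ω}

lemma Lp.ae_norm_le_norm_top {E : Type*} [NormedAddCommGroup E] (Y : Lp E ⊤ μ) :
    ∀ᵐ ω ∂μ, ‖Y ω‖ ≤ ‖Y‖ := by
  filter_upwards [ae_le_eLpNormEssSup (f := (Y : Ω → E)) (μ := μ)] with ω hω
  rw [Lp.norm_def, eLpNorm_exponent_top, ← ofReal_norm] at *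
  exact (ENNReal.ofReal_le_iff_le_toReal (by simpa using Lp.eLpNorm_ne_top Y)).1 hω

lemma Lp.integrable_top [IsFiniteMeasure μ] (Y : Lp ℝ ⊤ μ) : Integrable Y μ :=
  (Lp.memLp Y).integrable le_top

lemma Lp.integrable_mul_top (f : Lp ℝ 1 μ) (Y : Lp ℝ ⊤ μ) :
    Integrable (fun ω => f ω * Y ω) μ :=
  (L1.integrable_coeFn f).mul_of_top_left (Lp.memLp Y)

lemma unifIntegrable_of_ae_norm_le {ι E : Type*} [NormedAddCommGroup E] {p : ENNReal}
    (hp : 1 ≤ p) (hp' : p ≠ ⊤) {f : ι → Ω → E} (hf : ∀ i, AEStronglyMeasurable (f i) μ)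
    {C : ℝ} (hC : ∀ i, ∀ᵐ ω ∂μ, ‖f i ω‖ ≤ C) : UnifIntegrable f p μ := by
  refine unifIntegrable_of hp hp' hf fun _ _ => ⟨C.toNNReal + 1, fun i => ?_⟩
  have hzero : {ω | C.toNNReal + 1 ≤ ‖f i ω‖₊}.indicator (f i) =ᵐ[μ] 0 := by
    filter_upwards [hC i] with ω hω
    refine Set.indicator_of_notMem (fun h => ?_) _
    have h' : C.toNNReal + 1 ≤ ‖f i ω‖ := by exact_mod_cast h
    linarith [Real.le_coe_toNNReal C]
  rw [eLpNorm_congr_ae hzero, eLpNorm_zero]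
  exact zero_le

lemma integral_abs_eq_toReal_eLpNorm_one {f : Ω → ℝ} (hf : AEStronglyMeasurable f μ) :
    ∫ ω, |f ω| ∂μ = (eLpNorm f 1 μ).toReal := by
  simp_rw [eLpNorm_one_eq_lintegral_enorm, ← integral_norm_eq_lintegral_enorm hf,
    Real.norm_eq_abs]

lemma tendsto_integral_abs_sub_of_tendstoInMeasure [IsFiniteMeasure μ] {Xn : ℕ → Ω → ℝ}
    {X : Ω → ℝ} (hXn : ∀ n, AEStronglyMeasurable (Xn n) μ) (hX : Integrable X μ) {C : ℝ}
    (hC : ∀ n, ∀ᵐ ω ∂μ, |Xn n ω| ≤ C) (h : TendstoInMeasure μ Xn atTop X) :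
    Tendsto (fun n => ∫ ω, |Xn n ω - X ω| ∂μ) atTop (𝓝 0) := by
  have hL1 := tendsto_Lp_finite_of_tendstoInMeasure le_rfl ENNReal.one_ne_top hXn
    (memLp_one_iff_integrable.2 hX) (unifIntegrable_of_ae_norm_le le_rfl ENNReal.one_ne_top hXn hC) h
  have heq : ∀ n, ∫ ω, |Xn n ω - X ω| ∂μ = (eLpNorm (Xn n - X) 1 μ).toReal := fun n =>
    integral_abs_eq_toReal_eLpNorm_one ((hXn n).sub hX.aestronglyMeasurable)
  simpa [heq, Function.comp_def] using (ENNReal.tendsto_toReal ENNReal.zero_ne_top).comp hL1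

lemma abs_integral_mul_le_add_setIntegral {f Y : Ω → ℝ} (hf : Integrable f μ)
    (hf0 : 0 ≤ᵐ[μ] f) (hY : Integrable Y μ) {K D : ℝ} (hK : 0 ≤ K)
    (hYD : ∀ᵐ ω ∂μ, |Y ω| ≤ D) :
    |∫ ω, f ω * Y ω ∂μ| ≤ K * ∫ ω, |Y ω| ∂μ + D * ∫ ω in {ω | K < f ω}, f ω ∂μ := by
  have hs : NullMeasurableSet {ω | K < f ω} μ :=
    nullMeasurableSet_lt aemeasurable_const hf.aemeasurable
  have hfY : Integrable (fun ω => f ω * |Y ω|) μ :=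
    hf.mul_bdd hY.abs.aestronglyMeasurable (by simpa using hYD)
  have hsplit : ∀ᵐ ω ∂μ,
      f ω * |Y ω| ≤ K * |Y ω| + D * {ω | K < f ω}.indicator f ω := by
    filter_upwards [hf0, hYD] with ω hfω hYω
    by_cases hKf : K < f ω
    · rw [Set.indicator_of_mem (show ω ∈ {ω | K < f ω} from hKf)]
      nlinarith [abs_nonneg (Y ω)]
    · rw [Set.indicator_of_notMem (show ω ∉ {ω | K < f ω} from hKf)]
      nlinarith [abs_nonneg (Y ω)]
  calc |∫ ω, f ω * Y ω ∂μ| ≤ ∫ ω, |f ω * Y ω| ∂μ := abs_integral_le_integral_abs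
    _ = ∫ ω, f ω * |Y ω| ∂μ := by
      refine integral_congr_ae ?_
      filter_upwards [hf0] with ω hfω
      rw [abs_mul, abs_of_nonneg hfω]
    _ ≤ ∫ ω, (K * |Y ω| + D * {ω | K < f ω}.indicator f ω) ∂μ :=
      integral_mono_ae hfY ((hY.abs.const_mul K).add ((hf.indicator₀ hs).const_mul D)) hsplit
    _ = K * ∫ ω, |Y ω| ∂μ + D * ∫ ω in {ω | K < f ω}, f ω ∂μ := by
      rw [integral_add (hY.abs.const_mul K) ((hf.indicator₀ hs).const_mul D),
        integral_const_mul, integral_const_mul, integral_indicator₀ hs]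

lemma abs_integral_neg_mul_sub_integral_neg_mul_le [IsFiniteMeasure μ] (f : Lp ℝ 1 μ)
    (hf : 0 ≤ f) (Y Z : Lp ℝ ⊤ μ) {K D : ℝ} (hK : 0 ≤ K) (hYZ : ∀ᵐ ω ∂μ, |Y ω - Z ω| ≤ D) :
    |∫ ω, -(f ω * Y ω) ∂μ - ∫ ω, -(f ω * Z ω) ∂μ|
      ≤ K * ∫ ω, |Y ω - Z ω| ∂μ + D * ∫ ω in {ω | K < f ω}, f ω ∂μ := by
  rw [integral_neg, integral_neg, neg_sub_neg, abs_sub_comm,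
    ← integral_sub (Lp.integrable_mul_top f Y) (Lp.integrable_mul_top f Z)]
  simp_rw [← mul_sub]
  exact abs_integral_mul_le_add_setIntegral (L1.integrable_coeFn f) ((Lp.coeFn_nonneg f).2 hf)
    ((Lp.integrable_top Y).sub (Lp.integrable_top Z)) hK hYZ

lemma integral_neg_mul_le_integral_mul_norm (f : Lp ℝ 1 μ) (hf : 0 ≤ f) (Y : Lp ℝ ⊤ μ) :
    ∫ ω, -(f ω * Y ω) ∂μ ≤ (∫ ω, f ω ∂μ) * ‖Y‖ := by
  rw [← integral_mul_const]
  refine integral_mono_ae (Lp.integrable_mul_top f Y).neg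
    ((L1.integrable_coeFn f).mul_const _) ?_
  filter_upwards [(Lp.coeFn_nonneg f).2 hf, Lp.ae_norm_le_norm_top Y] with ω hfω hYω
  have hfω : 0 ≤ f ω := hfω
  nlinarith [neg_le_abs (Y ω), Real.norm_eq_abs (Y ω)]

lemma bddAbove_range_integral_neg_mul {H : Set (Lp ℝ 1 μ)}
    (hdens : ∀ f ∈ H, 0 ≤ f ∧ ∫ ω, (f : Ω → ℝ) ω ∂μ = 1) (Y : Lp ℝ ⊤ μ) :
    BddAbove (Set.range fun f : H => ∫ ω, -(f.1 ω * Y ω) ∂μ) := by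
  refine ⟨‖Y‖, ?_⟩
  rintro _ ⟨⟨f, hf⟩, rfl⟩
  simpa [(hdens f hf).2] using integral_neg_mul_le_integral_mul_norm f (hdens f hf).1 Y

end MeasureTheory

lemma abs_ciSup_sub_ciSup_le {ι : Sort*} {a b : ι → ℝ} (ha : BddAbove (Set.range a))
    (hb : BddAbove (Set.range b)) {c : ℝ} (hc : 0 ≤ c) (h : ∀ i, |a i - b i| ≤ c) :
    |(⨆ i, a i) - ⨆ i, b i| ≤ c := by
  rcases isEmpty_or_nonempty ι with hι | hι
  · simpa [Real.iSup_of_isEmpty] using hc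
  refine abs_sub_le_iff.2 ⟨?_, ?_⟩ <;> rw [sub_le_iff_le_add] <;> refine ciSup_le fun i => ?_
  · linarith [(abs_sub_le_iff.1 (h i)).1, le_ciSup hb i]
  · linarith [(abs_sub_le_iff.1 (h i)).2, le_ciSup ha i]

lemma tendsto_of_abs_sub_le_mul_add {α : Type*} {l : Filter α} {u a : α → ℝ} {x : ℝ}
    (ha : Tendsto a l (𝓝 0)) (h : ∀ η > 0, ∃ K, ∀ n, |u n - x| ≤ K * a n + η) :
    Tendsto u l (𝓝 x) := by
  refine Metric.tendsto_nhds.2 fun δ hδ => ?_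
  obtain ⟨K, hK⟩ := h (δ / 2) (half_pos hδ)
  have hKa : Tendsto (fun n => K * a n) l (𝓝 0) := by simpa using ha.const_mul K
  filter_upwards [hKa.eventually (gt_mem_nhds (half_pos hδ))] with n hn
  rw [Real.dist_eq]
  linarith [hK n]

theorem lebesgue_of_uniformly_integrable_general {Ω : Type*} [MeasurableSpace Ω]
    {μ : Measure Ω} [IsProbabilityMeasure μ]
    (H : Set (Lp ℝ 1 μ))
    (hdens : ∀ f ∈ H, 0 ≤ f ∧ ∫ ω, (f : Ω → ℝ) ω ∂μ = 1)
    (hUI : ∀ ε > (0 : ℝ), ∃ K > (0 : ℝ), ∀ f ∈ H,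
      ∫ ω in {ω | K < (f : Ω → ℝ) ω}, (f : Ω → ℝ) ω ∂μ < ε)
    (ρ : Lp ℝ ⊤ μ → ℝ)
    (hρ : ∀ X : Lp ℝ ⊤ μ,
      ρ X = ⨆ f : H, ∫ ω, -((f.1 : Ω → ℝ) ω * (X : Ω → ℝ) ω) ∂μ) :
    ∀ (Xn : ℕ → Lp ℝ ⊤ μ) (X : Lp ℝ ⊤ μ), (∃ C : ℝ, ∀ n, ‖Xn n‖ ≤ C) →
      TendstoInMeasure μ (fun n => ((Xn n : Ω → ℝ))) atTop (X : Ω → ℝ) →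
      Tendsto (fun n => ρ (Xn n)) atTop (nhds (ρ X)) := by
  intro Xn X ⟨C, hC⟩ hconv
  set D := C + ‖X‖ + 1
  have hD : 0 < D := by have := (norm_nonneg _).trans (hC 0); positivity
  have hXn : ∀ n, ∀ᵐ ω ∂μ, |Xn n ω| ≤ C := fun n => by
    filter_upwards [Lp.ae_norm_le_norm_top (Xn n)] with ω hω using hω.trans (hC n)
  have hdiff : ∀ n, ∀ᵐ ω ∂μ, |Xn n ω - X ω| ≤ D := fun n => by
    filter_upwards [hXn n, Lp.ae_norm_le_norm_top X] with ω h1 h2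
    linarith [abs_sub (Xn n ω) (X ω), Real.norm_eq_abs (X ω)]
  have hL1 := tendsto_integral_abs_sub_of_tendstoInMeasure (fun n => Lp.aestronglyMeasurable _)
    (Lp.integrable_top X) hXn hconv
  refine tendsto_of_abs_sub_le_mul_add hL1 fun η hη => ?_
  obtain ⟨K, hK, hKH⟩ := hUI (η / D) (by positivity)
  refine ⟨K, fun n => ?_⟩
  rw [hρ, hρ]
  refine abs_ciSup_sub_ciSup_le (bddAbove_range_integral_neg_mul hdens _)
    (bddAbove_range_integral_neg_mul hdens _) (by positivity) fun ⟨f, hf⟩ => ?_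
  calc _ ≤ K * ∫ ω, |Xn n ω - X ω| ∂μ + D * ∫ ω in {ω | K < f ω}, f ω ∂μ :=
        abs_integral_neg_mul_sub_integral_neg_mul_le f (hdens f hf).1 _ _ hK.le (hdiff n)
    _ ≤ K * ∫ ω, |Xn n ω - X ω| ∂μ + η := by
        grw [(hKH f hf).le, mul_div_cancel₀ η hD.ne']

/-- If `H` is a uniformly integrable set of densities, then the coherent risk
measure `ρ(X) = sup_{f ∈ H} E[−fX]` has the Lebesgue property: `ρ(Xₙ) → ρ(X)`
for every uniformly bounded sequence `Xₙ` converging in probability to `X`. -/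
theorem lebesgue_of_uniformly_integrable {Ω : Type*} [MeasurableSpace Ω]
    {μ : Measure Ω} [IsProbabilityMeasure μ]
    (H : Set (Lp ℝ 1 μ)) (hHne : H.Nonempty)
    (hdens : ∀ f ∈ H, 0 ≤ f ∧ ∫ ω, (f : Ω → ℝ) ω ∂μ = 1)
    (hUI : ∀ ε > (0 : ℝ), ∃ K > (0 : ℝ), ∀ f ∈ H,
      ∫ ω in {ω | K < (f : Ω → ℝ) ω}, (f : Ω → ℝ) ω ∂μ < ε)
    (ρ : Lp ℝ ⊤ μ → ℝ)
    (hρ : ∀ X : Lp ℝ ⊤ μ,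
      ρ X = ⨆ f : H, ∫ ω, -((f.1 : Ω → ℝ) ω * (X : Ω → ℝ) ω) ∂μ) :
    ∀ (Xn : ℕ → Lp ℝ ⊤ μ) (X : Lp ℝ ⊤ μ), (∃ C : ℝ, ∀ n, ‖Xn n‖ ≤ C) →
      TendstoInMeasure μ (fun n => ((Xn n : Ω → ℝ))) atTop (X : Ω → ℝ) →
      Tendsto (fun n => ρ (Xn n)) atTop (nhds (ρ X)) :=
  lebesgue_of_uniformly_integrable_general H hdens hUI ρ hρ
end

section
/- Let ρ : L∞ → ℝ be a coherent risk measure given by ρ(X) = sup_{f∈H} E[−fX], let X₁,…,X_N ∈ L∞ with X = X₁+⋯+X_N, and suppose g ∈ H attains ρ(X) = E[−gX]. Define kᵢ = E[−g Xᵢ]. Then k₁+⋯+k_N = ρ(X) and the allocation is fair: for all α₁,…,α_N ∈ [0,1], Σᵢ αᵢ kᵢ ≤ ρ(Σᵢ αᵢ Xᵢ). -/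
/-!
The allocation `kᵢ = E[−g Xᵢ]` is the restriction to the `Xᵢ` of the linear functional
`Y ↦ E[−g Y]`, which attains `ρ` at `X = ΣXᵢ` and lies below `ρ` everywhere because `g ∈ H`.
Linearity gives `Σkᵢ = ρ(X)` and `Σαᵢkᵢ = E[−g ΣαᵢXᵢ] ≤ ρ(ΣαᵢXᵢ)`. The supremum defining `ρ`
is a genuine one (not the junk value of `⨆` on an unbounded set) because densities have
`L¹`-norm one, so `E[−fY]` is bounded over `f ∈ H` by continuity of the `L¹`–`L^∞` pairing.
-/

open MeasureTheory ENNReal Set Bornology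

theorem ContinuousLinearMap.bddAbove_range_apply_apply {E F : Type*}
    [SeminormedAddCommGroup E] [NormedSpace ℝ E] [SeminormedAddCommGroup F] [NormedSpace ℝ F]
    (B : E →L[ℝ] F →L[ℝ] ℝ) {S : Set E} (hS : IsBounded S) (y : F) :
    BddAbove (range fun f : S => B f y) := by
  obtain ⟨C, hC⟩ := hS.exists_norm_le
  refine ⟨‖B‖ * C * ‖y‖, ?_⟩
  rintro _ ⟨f, rfl⟩
  calc B f y ≤ ‖B f y‖ := Real.le_norm_self _
    _ ≤ ‖B‖ * ‖(f : E)‖ * ‖y‖ := B.le_opNorm₂ f y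
    _ ≤ ‖B‖ * C * ‖y‖ := by gcongr; exact hC f f.2

namespace MeasureTheory

variable {Ω : Type*} [MeasurableSpace Ω] {μ : Measure Ω}

variable (μ) in
noncomputable abbrev l1LinftyPairing : Lp ℝ 1 μ →L[ℝ] Lp ℝ ∞ μ →L[ℝ] ℝ :=
  (ContinuousLinearMap.mul ℝ ℝ).lpPairing μ 1 ∞

theorem integral_neg_mul_eq_neg_l1LinftyPairing (f : Lp ℝ 1 μ) (Y : Lp ℝ ∞ μ) :
    ∫ ω, -(f ω * Y ω) ∂μ = -l1LinftyPairing μ f Y := by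
  rw [integral_neg, ContinuousLinearMap.lpPairing_eq_integral]
  rfl

theorem L1.norm_eq_integral_of_nonneg {f : Lp ℝ 1 μ} (hf : 0 ≤ f) : ‖f‖ = ∫ ω, f ω ∂μ := by
  rw [L1.norm_eq_integral_norm]
  refine integral_congr_ae ?_
  filter_upwards [(Lp.coeFn_nonneg f).2 hf] with ω hω using Real.norm_of_nonneg hω

theorem L1.isBounded_of_forall_density {H : Set (Lp ℝ 1 μ)}
    (hdens : ∀ f ∈ H, 0 ≤ f ∧ ∫ ω, f ω ∂μ = 1) : IsBounded H :=
  isBounded_iff_forall_norm_le.2 ⟨1, fun f hf => by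
    rw [L1.norm_eq_integral_of_nonneg (hdens f hf).1, (hdens f hf).2]⟩

end MeasureTheory

theorem fair_allocation_general {Ω : Type*} [MeasurableSpace Ω]
    {μ : Measure Ω}
    (H : Set (Lp ℝ 1 μ))
    (hdens : ∀ f ∈ H, 0 ≤ f ∧ ∫ ω, (f : Ω → ℝ) ω ∂μ = 1)
    (ρ : Lp ℝ ⊤ μ → ℝ)
    (hρ : ∀ X : Lp ℝ ⊤ μ,
      ρ X = ⨆ f : H, ∫ ω, -((f.1 : Ω → ℝ) ω * (X : Ω → ℝ) ω) ∂μ)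
    (N : ℕ) (Xs : Fin N → Lp ℝ ⊤ μ) (g : Lp ℝ 1 μ) (hg : g ∈ H)
    (hattain : ρ (∑ i, Xs i) =
      ∫ ω, -((g : Ω → ℝ) ω * ((∑ i, Xs i : Lp ℝ ⊤ μ) : Ω → ℝ) ω) ∂μ)
    (k : Fin N → ℝ)
    (hk : ∀ i, k i = ∫ ω, -((g : Ω → ℝ) ω * ((Xs i : Ω → ℝ)) ω) ∂μ) :
    (∑ i, k i = ρ (∑ i, Xs i)) ∧
    (∀ α : Fin N → ℝ, (∀ i, 0 ≤ α i ∧ α i ≤ 1) →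
      ∑ i, α i * k i ≤ ρ (∑ i, α i • Xs i)) := by
  simp only [integral_neg_mul_eq_neg_l1LinftyPairing] at hρ hattain hk
  refine ⟨by simp [hattain, hk], fun α _ => ?_⟩
  have hbdd := (-l1LinftyPairing μ).bddAbove_range_apply_apply
    (L1.isBounded_of_forall_density hdens) (∑ i, α i • Xs i)
  calc ∑ i, α i * k i = -l1LinftyPairing μ g (∑ i, α i • Xs i) := by simp [hk]
    _ ≤ ρ (∑ i, α i • Xs i) := by
      rw [hρ]
      exact le_ciSup (f := fun f : H => -l1LinftyPairing μ f (∑ i, α i • Xs i)) hbdd ⟨g, hg⟩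

/-- Capital allocation: if `g ∈ H` attains `ρ(X) = E[−gX]` for
`X = X₁ + ⋯ + X_N`, then `kᵢ = E[−g Xᵢ]` sums to `ρ(X)` and is a fair
allocation: `Σ αᵢ kᵢ ≤ ρ(Σ αᵢ Xᵢ)` for all `αᵢ ∈ [0,1]`. -/
theorem fair_allocation {Ω : Type*} [MeasurableSpace Ω]
    {μ : Measure Ω} [IsProbabilityMeasure μ]
    (H : Set (Lp ℝ 1 μ)) (hHne : H.Nonempty)
    (hdens : ∀ f ∈ H, 0 ≤ f ∧ ∫ ω, (f : Ω → ℝ) ω ∂μ = 1)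
    (ρ : Lp ℝ ⊤ μ → ℝ)
    (hρ : ∀ X : Lp ℝ ⊤ μ,
      ρ X = ⨆ f : H, ∫ ω, -((f.1 : Ω → ℝ) ω * (X : Ω → ℝ) ω) ∂μ)
    (N : ℕ) (Xs : Fin N → Lp ℝ ⊤ μ) (g : Lp ℝ 1 μ) (hg : g ∈ H)
    (hattain : ρ (∑ i, Xs i) =
      ∫ ω, -((g : Ω → ℝ) ω * ((∑ i, Xs i : Lp ℝ ⊤ μ) : Ω → ℝ) ω) ∂μ)
    (k : Fin N → ℝ)
    (hk : ∀ i, k i = ∫ ω, -((g : Ω → ℝ) ω * ((Xs i : Ω → ℝ)) ω) ∂μ) :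
    (∑ i, k i = ρ (∑ i, Xs i)) ∧
    (∀ α : Fin N → ℝ, (∀ i, 0 ≤ α i ∧ α i ≤ 1) →
      ∑ i, α i * k i ≤ ρ (∑ i, α i • Xs i)) :=
  fair_allocation_general H hdens ρ hρ N Xs g hg hattain k hk
end

section
/- Let H ⊆ L¹₊(Ω) be a set of densities (f ≥ 0, E[f] = 1) that is NOT uniformly integrable. Then there exist ε > 0, a uniformly bounded sequence (Xₙ) ⊆ L∞ with 0 ≤ Xₙ ≤ 1 and Xₙ → 0 in probability, such that sup_{f∈H} E[f Xₙ] ≥ ε for all n. Consequently the coherent risk measure ρ(X) = sup_{f∈H} E[−fX] fails the Lebesgue property. -/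
/-!
Choose densities `fₙ ∈ H` carrying mass at least `ε` above level `n`. By Markov's inequality
`P(fₙ > n) ≤ 1/n`, so the indicators `Xₙ = 1_{fₙ > n}` tend to `0` in probability while
`E[fₙ Xₙ] ≥ ε`. Hence `ρ(-Xₙ) ≥ ε` for all `n`, whereas `ρ(0) = 0`.
-/

open MeasureTheory Filter Topology

namespace MeasureTheory

variable {Ω : Type*} [MeasurableSpace Ω] {μ : Measure Ω}

theorem measure_lt_le_ofReal_integral_div [IsFiniteMeasure μ] {f : Ω → ℝ} (hf0 : 0 ≤ᵐ[μ] f)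
    (hfi : Integrable f μ) {K : ℝ} (hK : 0 < K) :
    μ {x | K < f x} ≤ ENNReal.ofReal ((∫ x, f x ∂μ) / K) := by
  have hmarkov := mul_meas_ge_le_integral_of_nonneg hf0 hfi K
  calc μ {x | K < f x} ≤ μ {x | K ≤ f x} := measure_mono fun x (hx : K < f x) => hx.le
    _ ≤ ENNReal.ofReal ((∫ x, f x ∂μ) / K) := by
      rw [ENNReal.le_ofReal_iff_toReal_le (measure_ne_top μ _)
        (div_nonneg (integral_nonneg_of_ae hf0) hK.le), le_div_iff₀ hK, ← measureReal_def]
      linarith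

theorem tendsto_measure_nat_lt_of_integral_le [IsFiniteMeasure μ] {f : ℕ → Ω → ℝ} {C : ℝ}
    (hf0 : ∀ n, 0 ≤ᵐ[μ] f n) (hfi : ∀ n, Integrable (f n) μ) (hC : ∀ n, ∫ x, f n x ∂μ ≤ C) :
    Tendsto (fun n : ℕ => μ {x | (n : ℝ) < f n x}) atTop (𝓝 0) := by
  have hbound : Tendsto (fun n : ℕ => ENNReal.ofReal (C / n)) atTop (𝓝 0) := by
    simpa using ENNReal.tendsto_ofReal (tendsto_const_div_atTop_nhds_zero_nat C)
  refine tendsto_of_tendsto_of_tendsto_of_le_of_le' tendsto_const_nhds hbound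
    (Eventually.of_forall fun _ => zero_le) ?_
  filter_upwards [eventually_gt_atTop 0] with n hn
  have hn' : (0 : ℝ) < n := Nat.cast_pos.mpr hn
  exact (measure_lt_le_ofReal_integral_div (hf0 n) (hfi n) hn').trans
    (ENNReal.ofReal_le_ofReal (div_le_div_of_nonneg_right (hC n) hn'.le))

theorem tendstoInMeasure_indicator_const {ι E : Type*} [PseudoEMetricSpace E] [Zero E]
    {l : Filter ι} {s : ι → Set Ω} (hs : Tendsto (fun i => μ (s i)) l (𝓝 0)) (c : E) :
    TendstoInMeasure μ (fun i => (s i).indicator fun _ => c) l 0 := by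
  intro δ hδ
  refine tendsto_of_tendsto_of_tendsto_of_le_of_le tendsto_const_nhds hs (fun _ => zero_le)
    fun i => measure_mono fun x hx => ?_
  by_contra hxs
  simp only [Set.mem_ofPred_eq, Set.indicator_of_notMem hxs, Pi.zero_apply, edist_self] at hx
  exact hδ.not_ge hx

theorem TendstoInMeasure.neg {ι E : Type*} [SeminormedAddCommGroup E] {l : Filter ι}
    {f : ι → Ω → E} {g : Ω → E} (h : TendstoInMeasure μ f l g) :
    TendstoInMeasure μ (fun i => -f i) l (-g) := by
  intro δ hδ
  simpa only [Pi.neg_apply, edist_neg_neg] using h δ hδ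

section indicatorConstLp

variable {p : ENNReal} {s : Set Ω}

theorem integral_mul_indicatorConstLp_one (hs : MeasurableSet s) (hμs : μ s ≠ ⊤) (g : Ω → ℝ) :
    ∫ x, g x * indicatorConstLp p hs hμs (1 : ℝ) x ∂μ = ∫ x in s, g x ∂μ := by
  rw [← integral_indicator hs]
  refine integral_congr_ae ?_
  filter_upwards [indicatorConstLp_coeFn (p := p) (hs := hs) (hμs := hμs) (c := (1 : ℝ))]
    with x hx
  simp only [hx, ← Set.indicator_mul_right, mul_one]

theorem indicatorConstLp_one_nonneg (hs : MeasurableSet s) (hμs : μ s ≠ ⊤) :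
    0 ≤ indicatorConstLp p hs hμs (1 : ℝ) := by
  rw [← Lp.coeFn_nonneg]
  filter_upwards [indicatorConstLp_coeFn (p := p) (hs := hs) (hμs := hμs) (c := (1 : ℝ))]
    with x hx
  rw [hx]
  exact Set.indicator_nonneg (fun _ _ => zero_le_one) x

theorem indicatorConstLp_one_le_const [IsFiniteMeasure μ] (hs : MeasurableSet s)
    (hμs : μ s ≠ ⊤) :
    indicatorConstLp p hs hμs (1 : ℝ) ≤ Lp.const p μ 1 := by
  rw [← Lp.coeFn_le]
  filter_upwards [indicatorConstLp_coeFn (p := p) (hs := hs) (hμs := hμs) (c := (1 : ℝ)),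
    Lp.coeFn_const (p := p) (μ := μ) (c := (1 : ℝ))] with x hx hc
  rw [hx, hc]
  exact Set.indicator_le_self' (fun _ _ => zero_le_one) x

end indicatorConstLp

def HasLebesgueProperty (ρ : Lp ℝ ⊤ μ → ℝ) : Prop :=
  ∀ (Xn : ℕ → Lp ℝ ⊤ μ) (X : Lp ℝ ⊤ μ), (∃ C : ℝ, ∀ n, ‖Xn n‖ ≤ C) →
    TendstoInMeasure μ (fun n => (Xn n : Ω → ℝ)) atTop X →
    Tendsto (fun n => ρ (Xn n)) atTop (𝓝 (ρ X))

variable [IsFiniteMeasure μ]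

theorem exists_indicators_tendstoInMeasure_zero_le_iSup_integral_mul {H : Set (Lp ℝ 1 μ)}
    (hdens : ∀ f ∈ H, 0 ≤ f ∧ ∫ ω, (f : Ω → ℝ) ω ∂μ = 1)
    (hnotUI : ∃ ε > (0 : ℝ), ∀ K : ℝ, ∃ f ∈ H,
      ε ≤ ∫ ω in {ω | K < (f : Ω → ℝ) ω}, (f : Ω → ℝ) ω ∂μ) :
    ∃ ε > (0 : ℝ), ∃ Xn : ℕ → Lp ℝ ⊤ μ,
      (∀ n, 0 ≤ Xn n ∧ Xn n ≤ Lp.const ⊤ μ (1 : ℝ)) ∧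
      TendstoInMeasure μ (fun n => (Xn n : Ω → ℝ)) atTop (fun _ => 0) ∧
      ∀ n, ε ≤ ⨆ f : H, ∫ ω, (f.1 : Ω → ℝ) ω * (Xn n : Ω → ℝ) ω ∂μ := by
  obtain ⟨ε, hε, hUI⟩ := hnotUI
  choose f hfH hfε using fun n : ℕ => hUI n
  have hf0 : ∀ g ∈ H, 0 ≤ᵐ[μ] ⇑g := fun g hg => Lp.coeFn_nonneg g |>.mpr (hdens g hg).1
  have hA : ∀ n : ℕ, MeasurableSet {ω | (n : ℝ) < f n ω} := fun n =>
    measurableSet_lt measurable_const (Lp.stronglyMeasurable (f n)).measurable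
  let Xn n := indicatorConstLp ⊤ (hA n) (measure_ne_top μ _) (1 : ℝ)
  have hbdd : ∀ n, BddAbove (Set.range fun g : H => ∫ ω, (g.1 : Ω → ℝ) ω * Xn n ω ∂μ) := by
    refine fun n => ⟨1, ?_⟩
    rintro _ ⟨g, rfl⟩
    dsimp only [Xn]
    rw [integral_mul_indicatorConstLp_one, ← (hdens g.1 g.2).2]
    exact setIntegral_le_integral (L1.integrable_coeFn g.1) (hf0 g.1 g.2)
  refine ⟨ε, hε, Xn,
    fun n => ⟨indicatorConstLp_one_nonneg _ _, indicatorConstLp_one_le_const _ _⟩, ?_,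
    fun n => le_ciSup_of_le (hbdd n) ⟨f n, hfH n⟩ ?_⟩
  · refine (tendstoInMeasure_indicator_const ?_ 1).congr_left fun n => indicatorConstLp_coeFn.symm
    exact tendsto_measure_nat_lt_of_integral_le (fun n => hf0 _ (hfH n))
      (fun n => L1.integrable_coeFn (f n)) (fun n => (hdens _ (hfH n)).2.le)
  · rw [integral_mul_indicatorConstLp_one]
    exact hfε n

theorem not_hasLebesgueProperty_of_le_iSup_integral_mul {H : Set (Lp ℝ 1 μ)} {ρ : Lp ℝ ⊤ μ → ℝ}
    (hρ : ∀ X : Lp ℝ ⊤ μ, ρ X = ⨆ f : H, ∫ ω, -((f.1 : Ω → ℝ) ω * (X : Ω → ℝ) ω) ∂μ)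
    {ε : ℝ} (hε : 0 < ε) {Xn : ℕ → Lp ℝ ⊤ μ}
    (hXn01 : ∀ n, 0 ≤ Xn n ∧ Xn n ≤ Lp.const ⊤ μ (1 : ℝ))
    (hXn0 : TendstoInMeasure μ (fun n => (Xn n : Ω → ℝ)) atTop (fun _ => 0))
    (hXnε : ∀ n, ε ≤ ⨆ f : H, ∫ ω, (f.1 : Ω → ℝ) ω * (Xn n : Ω → ℝ) ω ∂μ) :
    ¬ HasLebesgueProperty ρ := by
  intro hLeb
  have hnorm : ∀ n, ‖-Xn n‖ ≤ ‖Lp.const ⊤ μ (1 : ℝ)‖ := fun n => by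
    obtain ⟨hX0, hX1⟩ := hXn01 n
    rw [norm_neg]
    exact norm_le_norm_of_abs_le_abs (by rwa [abs_of_nonneg hX0, abs_of_nonneg (hX0.trans hX1)])
  have hneg0 : TendstoInMeasure μ (fun n => ((-Xn n : Lp ℝ ⊤ μ) : Ω → ℝ)) atTop
      ((0 : Lp ℝ ⊤ μ) : Ω → ℝ) :=
    hXn0.neg.congr (fun n => (Lp.coeFn_neg (Xn n)).symm) (by
      filter_upwards [Lp.coeFn_zero ℝ ⊤ μ] with x hx
      rw [hx]; simp)
  have hρ0 : ρ 0 = 0 := by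
    have hzero : ∀ f : H, ∫ ω, -((f.1 : Ω → ℝ) ω * ((0 : Lp ℝ ⊤ μ) : Ω → ℝ) ω) ∂μ = 0 :=
      fun f => integral_eq_zero_of_ae (by
        filter_upwards [Lp.coeFn_zero ℝ ⊤ μ] with x hx
        rw [hx]; simp)
    rw [hρ, iSup_congr hzero, Real.iSup_const_zero]
  have hρneg : ∀ n, ε ≤ ρ (-Xn n) := fun n => by
    rw [hρ]
    refine (hXnε n).trans_eq (iSup_congr fun f => integral_congr_ae ?_)
    filter_upwards [Lp.coeFn_neg (Xn n)] with x hx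
    rw [hx, Pi.neg_apply]
    ring
  have := hLeb (fun n => -Xn n) 0 ⟨_, hnorm⟩ hneg0
  rw [hρ0] at this
  exact hε.not_ge (ge_of_tendsto this (Eventually.of_forall hρneg))

end MeasureTheory

theorem not_lebesgue_of_not_uniformly_integrable_general {Ω : Type*} [MeasurableSpace Ω]
    {μ : Measure Ω} [IsProbabilityMeasure μ]
    (H : Set (Lp ℝ 1 μ))
    (hdens : ∀ f ∈ H, 0 ≤ f ∧ ∫ ω, (f : Ω → ℝ) ω ∂μ = 1)
    (hnotUI : ∃ ε > (0 : ℝ), ∀ K : ℝ, ∃ f ∈ H,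
      ε ≤ ∫ ω in {ω | K < (f : Ω → ℝ) ω}, (f : Ω → ℝ) ω ∂μ)
    (ρ : Lp ℝ ⊤ μ → ℝ)
    (hρ : ∀ X : Lp ℝ ⊤ μ,
      ρ X = ⨆ f : H, ∫ ω, -((f.1 : Ω → ℝ) ω * (X : Ω → ℝ) ω) ∂μ) :
    (∃ ε > (0 : ℝ), ∃ Xn : ℕ → Lp ℝ ⊤ μ,
      (∀ n, 0 ≤ Xn n ∧ Xn n ≤ Lp.const ⊤ μ (1 : ℝ)) ∧
      TendstoInMeasure μ (fun n => ((Xn n : Ω → ℝ))) atTop (fun _ => 0) ∧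
      ∀ n, ε ≤ ⨆ f : H, ∫ ω, (f.1 : Ω → ℝ) ω * (Xn n : Ω → ℝ) ω ∂μ) ∧
    ¬ (∀ (Xn : ℕ → Lp ℝ ⊤ μ) (X : Lp ℝ ⊤ μ), (∃ C : ℝ, ∀ n, ‖Xn n‖ ≤ C) →
        TendstoInMeasure μ (fun n => ((Xn n : Ω → ℝ))) atTop (X : Ω → ℝ) →
        Tendsto (fun n => ρ (Xn n)) atTop (nhds (ρ X))) := by
  obtain ⟨ε, hε, Xn, hXn01, hXn0, hXnε⟩ :=
    exists_indicators_tendstoInMeasure_zero_le_iSup_integral_mul hdens hnotUI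
  exact ⟨⟨ε, hε, Xn, hXn01, hXn0, hXnε⟩,
    not_hasLebesgueProperty_of_le_iSup_integral_mul hρ hε hXn01 hXn0 hXnε⟩

/-- If a set `H` of densities is not uniformly integrable, there exist `ε > 0`
and a sequence `Xₙ` with `0 ≤ Xₙ ≤ 1`, converging to `0` in probability, with
`sup_{f∈H} E[f Xₙ] ≥ ε` for all `n`; consequently the coherent risk measure
`ρ(X) = sup_{f∈H} E[−fX]` fails the Lebesgue property. -/
theorem not_lebesgue_of_not_uniformly_integrable {Ω : Type*} [MeasurableSpace Ω]
    {μ : Measure Ω} [IsProbabilityMeasure μ]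
    (H : Set (Lp ℝ 1 μ)) (hHne : H.Nonempty)
    (hdens : ∀ f ∈ H, 0 ≤ f ∧ ∫ ω, (f : Ω → ℝ) ω ∂μ = 1)
    (hnotUI : ∃ ε > (0 : ℝ), ∀ K : ℝ, ∃ f ∈ H,
      ε ≤ ∫ ω in {ω | K < (f : Ω → ℝ) ω}, (f : Ω → ℝ) ω ∂μ)
    (ρ : Lp ℝ ⊤ μ → ℝ)
    (hρ : ∀ X : Lp ℝ ⊤ μ,
      ρ X = ⨆ f : H, ∫ ω, -((f.1 : Ω → ℝ) ω * (X : Ω → ℝ) ω) ∂μ) :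
    (∃ ε > (0 : ℝ), ∃ Xn : ℕ → Lp ℝ ⊤ μ,
      (∀ n, 0 ≤ Xn n ∧ Xn n ≤ Lp.const ⊤ μ (1 : ℝ)) ∧
      TendstoInMeasure μ (fun n => ((Xn n : Ω → ℝ))) atTop (fun _ => 0) ∧
      ∀ n, ε ≤ ⨆ f : H, ∫ ω, (f.1 : Ω → ℝ) ω * (Xn n : Ω → ℝ) ω ∂μ) ∧
    ¬ (∀ (Xn : ℕ → Lp ℝ ⊤ μ) (X : Lp ℝ ⊤ μ), (∃ C : ℝ, ∀ n, ‖Xn n‖ ≤ C) →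
        TendstoInMeasure μ (fun n => ((Xn n : Ω → ℝ))) atTop (X : Ω → ℝ) →
        Tendsto (fun n => ρ (Xn n)) atTop (nhds (ρ X))) :=
  not_lebesgue_of_not_uniformly_integrable_general H hdens hnotUI ρ hρ
end

section
/- Let (fₙ) be a sequence in L¹(Ω) lying in a uniformly integrable set H, and suppose fₙ → f weakly in σ(L¹, L∞). Then for every uniformly bounded sequence (Xₙ) ⊆ L∞ with Xₙ → X in probability, E[fₙ Xₙ] → E[f X]. -/
open MeasureTheory Filter Topology

/-! Write `E[fₙ Xₙ] = E[fₙ (Xₙ - X)] + E[fₙ X]`; the second term tends to `E[f X]` by weak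
convergence. For the first, with `C` a bound for `|Xₙ - X|`, split pointwise
`|fₙ| |Xₙ - X| ≤ C |fₙ| 1{K < |fₙ|} + C K 1{δ ≤ |Xₙ - X|} + δ |fₙ|`:
uniform integrability makes the first term small for large `K`, the `L¹` bound the third for
small `δ`, and convergence in probability then makes the second small for large `n`. -/

lemma MeasureTheory.Lp.ae_norm_le_norm_top_s19 {Ω E : Type*} [MeasurableSpace Ω] {μ : Measure Ω}
    [NormedAddCommGroup E] (g : Lp E ⊤ μ) : ∀ᵐ ω ∂μ, ‖(g : Ω → E) ω‖ ≤ ‖g‖ := by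
  have hfin : eLpNormEssSup (g : Ω → E) μ ≠ ⊤ := by
    rw [← eLpNorm_exponent_top]; exact (Lp.eLpNorm_lt_top g).ne
  filter_upwards [ae_le_eLpNormEssSup (f := (g : Ω → E)) (μ := μ)] with ω hω
  simpa [Lp.norm_def, eLpNorm_exponent_top] using ENNReal.toReal_mono hfin hω

lemma abs_mul_abs_le_tail_add {x y C K δ : ℝ} (hy : |y| ≤ C) (hK : 0 ≤ K) (hδ : 0 ≤ δ) :
    |x| * |y| ≤ C * (if K < |x| then |x| else 0) + (if δ ≤ |y| then C * K else 0) + δ * |x| := by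
  have hC : 0 ≤ C := (abs_nonneg y).trans hy
  have hx := abs_nonneg x
  have hy0 := abs_nonneg y
  split_ifs with h1 h2 h2 <;> nlinarith

lemma mul_div_add_one_le {a b : ℝ} (ha : 0 ≤ a) (hb : 0 ≤ b) : a * (b / (a + 1)) ≤ b := by
  rw [mul_div_assoc', div_le_iff₀ (by linarith)]
  nlinarith

section

variable {Ω : Type*} [MeasurableSpace Ω] {μ : Measure Ω} [IsFiniteMeasure μ]

lemma integral_abs_mul_abs_le_tail_add {g h : Ω → ℝ} (hg : Integrable g μ)
    (hhm : AEStronglyMeasurable h μ) {C K δ : ℝ} (hh : ∀ᵐ ω ∂μ, |h ω| ≤ C) (hK : 0 ≤ K)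
    (hδ : 0 ≤ δ) :
    ∫ ω, |g ω| * |h ω| ∂μ ≤ C * ∫ ω in {ω | K < |g ω|}, |g ω| ∂μ
      + C * K * μ.real {ω | δ ≤ |h ω|} + δ * ∫ ω, |g ω| ∂μ := by
  have hU : NullMeasurableSet {ω | K < |g ω|} μ :=
    aestronglyMeasurable_const.nullMeasurableSet_lt hg.abs.1
  have hA : NullMeasurableSet {ω | δ ≤ |h ω|} μ :=
    aestronglyMeasurable_const.nullMeasurableSet_le hhm.norm
  have htail : Integrable ({ω | K < |g ω|}.indicator fun ω => |g ω|) μ :=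
    hg.abs.indicator₀ hU
  have hbad : Integrable ({ω | δ ≤ |h ω|}.indicator fun _ => C * K) μ :=
    (integrable_const _).indicator₀ hA
  have hsum : Integrable (fun ω => C * {ω | K < |g ω|}.indicator (fun ω => |g ω|) ω
      + {ω | δ ≤ |h ω|}.indicator (fun _ => C * K) ω) μ := (htail.const_mul C).add hbad
  calc ∫ ω, |g ω| * |h ω| ∂μ
      ≤ ∫ ω, (C * {ω | K < |g ω|}.indicator (fun ω => |g ω|) ω
          + {ω | δ ≤ |h ω|}.indicator (fun _ => C * K) ω + δ * |g ω|) ∂μ := by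
        refine integral_mono_ae ?_ (hsum.add (hg.abs.const_mul δ)) ?_
        · exact hg.abs.mul_bdd hhm.norm (by simpa using hh)
        · filter_upwards [hh] with ω hω
          simpa only [Set.indicator_apply, Set.mem_ofPred_eq] using
            abs_mul_abs_le_tail_add hω hK hδ
    _ = _ := by
        rw [integral_add hsum (hg.abs.const_mul δ), integral_add (htail.const_mul C) hbad,
          integral_const_mul, integral_const_mul, integral_indicator₀ hU, integral_indicator₀ hA,
          setIntegral_const, smul_eq_mul, mul_comm (μ.real _)]

variable {ι : Type*} {l : Filter ι} {g h : ι → Ω → ℝ}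

lemma eventually_integral_abs_mul_abs_le (hg : ∀ i, Integrable (g i) μ)
    (hhm : ∀ i, AEStronglyMeasurable (h i) μ)
    (htail : ∀ ε > (0 : ℝ), ∃ K > (0 : ℝ), ∀ i, ∫ ω in {ω | K < |g i ω|}, |g i ω| ∂μ < ε)
    {B : ℝ} (hB : ∀ i, ∫ ω, |g i ω| ∂μ ≤ B) {C : ℝ} (hh : ∀ i, ∀ᵐ ω ∂μ, |h i ω| ≤ C)
    (hlim : TendstoInMeasure μ h l 0) {ε : ℝ} (hε : 0 < ε) :
    ∀ᶠ i in l, ∫ ω, |g i ω| * |h i ω| ∂μ ≤ ε := by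
  set ε₃ := ε / 3
  have hε₃ : 0 < ε₃ := by positivity
  obtain ⟨K, hK, hKtail⟩ := htail (ε₃ / (|C| + 1)) (by positivity)
  set δ := ε₃ / (|B| + 1)
  have hsmall : ∀ᶠ i in l, μ.real {ω | δ ≤ |h i ω|} < ε₃ / (|C| * K + 1) := by
    have := (tendstoInMeasure_iff_measureReal_norm.1 hlim) δ (by positivity)
    simp only [Pi.zero_apply, sub_zero, Real.norm_eq_abs] at this
    exact this.eventually (gt_mem_nhds (by positivity))
  filter_upwards [hsmall] with i hi
  have hC := abs_nonneg C
  calc ∫ ω, |g i ω| * |h i ω| ∂μ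
      ≤ |C| * ∫ ω in {ω | K < |g i ω|}, |g i ω| ∂μ
        + |C| * K * μ.real {ω | δ ≤ |h i ω|} + δ * ∫ ω, |g i ω| ∂μ :=
        integral_abs_mul_abs_le_tail_add (hg i) (hhm i)
          ((hh i).mono fun ω hω => hω.trans (le_abs_self C)) hK.le (by positivity)
    _ ≤ |C| * (ε₃ / (|C| + 1)) + |C| * K * (ε₃ / (|C| * K + 1)) + δ * |B| := by
        gcongr
        · exact (hKtail i).le
        · exact (hB i).trans (le_abs_self B)
    _ ≤ ε₃ + ε₃ + ε₃ := by
        gcongr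
        · exact mul_div_add_one_le hC hε₃.le
        · exact mul_div_add_one_le (by positivity) hε₃.le
        · exact (mul_comm _ _).trans_le (mul_div_add_one_le (abs_nonneg B) hε₃.le)
    _ = ε := by ring

lemma tendsto_integral_mul_of_tendstoInMeasure_zero (hg : ∀ i, Integrable (g i) μ)
    (hhm : ∀ i, AEStronglyMeasurable (h i) μ)
    (htail : ∀ ε > (0 : ℝ), ∃ K > (0 : ℝ), ∀ i, ∫ ω in {ω | K < |g i ω|}, |g i ω| ∂μ < ε)
    {B : ℝ} (hB : ∀ i, ∫ ω, |g i ω| ∂μ ≤ B) {C : ℝ} (hh : ∀ i, ∀ᵐ ω ∂μ, |h i ω| ≤ C)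
    (hlim : TendstoInMeasure μ h l 0) :
    Tendsto (fun i => ∫ ω, g i ω * h i ω ∂μ) l (𝓝 0) := by
  refine Metric.tendsto_nhds.2 fun ε hε => ?_
  filter_upwards [eventually_integral_abs_mul_abs_le hg hhm htail hB hh hlim (half_pos hε)]
    with i hi
  calc dist (∫ ω, g i ω * h i ω ∂μ) 0
      ≤ ∫ ω, |g i ω| * |h i ω| ∂μ := by
        rw [Real.dist_0_eq_abs]
        exact abs_integral_le_integral_abs.trans_eq (by simp only [abs_mul])
    _ < ε := hi.trans_lt (half_lt_self hε)

end

/-- If `fₙ` lies in a uniformly integrable set `H ⊆ L¹` and `fₙ → f` weakly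
(against all of `L∞`), then for any uniformly bounded sequence `Xₙ` in `L∞`
converging in probability to `X`, one has `E[fₙ Xₙ] → E[f X]`. -/
theorem integral_mul_tendsto_of_unifInt {Ω : Type*} [MeasurableSpace Ω]
    {μ : Measure Ω} [IsProbabilityMeasure μ]
    (H : Set (Lp ℝ 1 μ))
    (hUI : (∀ ε > (0 : ℝ), ∃ K > (0 : ℝ), ∀ g ∈ H,
        ∫ ω in {ω | K < |(g : Ω → ℝ) ω|}, |(g : Ω → ℝ) ω| ∂μ < ε) ∧
      ∃ B : ℝ, ∀ g ∈ H, ∫ ω, |(g : Ω → ℝ) ω| ∂μ ≤ B)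
    (fn : ℕ → Lp ℝ 1 μ) (hfn : ∀ n, fn n ∈ H) (f : Lp ℝ 1 μ)
    (hweak : ∀ g : Lp ℝ ⊤ μ,
      Tendsto (fun n => ∫ ω, (fn n : Ω → ℝ) ω * (g : Ω → ℝ) ω ∂μ) atTop
        (nhds (∫ ω, (f : Ω → ℝ) ω * (g : Ω → ℝ) ω ∂μ)))
    (Xn : ℕ → Lp ℝ ⊤ μ) (X : Lp ℝ ⊤ μ) (M : ℝ) (hM : ∀ n, ‖Xn n‖ ≤ M)
    (hX : TendstoInMeasure μ (fun n => ((Xn n : Ω → ℝ))) atTop (X : Ω → ℝ)) :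
    Tendsto (fun n => ∫ ω, (fn n : Ω → ℝ) ω * (Xn n : Ω → ℝ) ω ∂μ) atTop
      (nhds (∫ ω, (f : Ω → ℝ) ω * (X : Ω → ℝ) ω ∂μ)) := by
  obtain ⟨htail, B, hB⟩ := hUI
  have hdiff : TendstoInMeasure μ (fun n => (Xn n : Ω → ℝ) - (X : Ω → ℝ)) atTop 0 := by
    simpa [tendstoInMeasure_iff_norm] using hX
  have hbound (n : ℕ) : ∀ᵐ ω ∂μ, |(Xn n : Ω → ℝ) ω - (X : Ω → ℝ) ω| ≤ M + ‖X‖ := by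
    filter_upwards [Lp.ae_norm_le_norm_top_s19 (Xn n), Lp.ae_norm_le_norm_top_s19 X] with ω hXn hX
    exact (norm_sub_le _ _).trans (add_le_add (hXn.trans (hM n)) hX)
  have hsplit (n : ℕ) : ∫ ω, (fn n : Ω → ℝ) ω * (Xn n : Ω → ℝ) ω ∂μ =
      ∫ ω, (fn n : Ω → ℝ) ω * ((Xn n : Ω → ℝ) - (X : Ω → ℝ)) ω ∂μ
        + ∫ ω, (fn n : Ω → ℝ) ω * (X : Ω → ℝ) ω ∂μ := by
    rw [← integral_add ((L1.integrable_coeFn _).mul_of_top_left ((Lp.memLp _).sub (Lp.memLp _)))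
      ((L1.integrable_coeFn _).mul_of_top_left (Lp.memLp _))]
    simp only [Pi.sub_apply, mul_sub, sub_add_cancel]
  have hsmall := tendsto_integral_mul_of_tendstoInMeasure_zero
    (fun n => L1.integrable_coeFn (fn n)) (fun n => (Lp.memLp (Xn n)).1.sub (Lp.memLp X).1)
    (fun ε hε => (htail ε hε).imp fun K ⟨hK, hKtail⟩ => ⟨hK, fun n => hKtail _ (hfn n)⟩)
    (fun n => hB _ (hfn n)) hbound hdiff
  simpa only [hsplit, zero_add] using hsmall.add (hweak X)
end
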